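/- Let p be an odd prime, t ≥ 1, and let a be an integer with gcd(a,p) = 1. Then #S'_2(a;p^t) = (p−1)p^{t−1}/2 if the Legendre symbol (a/p) = −1, and #S'_2(a;p^t) = (p−3)p^{t−1}/2 if (a/p) = 1. -/

import Mathlib

/-!
For `k` with `p ∤ k² - a`, Hensel's lemma (`p` odd) shows that `k² - a` is a square modulo
`p^t` iff it is a square modulo `p`. Hence `S'_2(a;p^t)` is the full preimage under
`ZMod (p^t) → ZMod p` of `T = {y | y² - a is a nonzero square}`, and every fibre of this map
has `p^(t-1)` elements.

To count `T`, let `χ` be the quadratic character. The conic `x² - y² = a` has `p - 1` points (it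
becomes `xy = a` after a linear change of variables), and the fibre over `x` has `χ(x² - a) + 1`
points, so `∑ₓ χ(x² - a) = -1`. Comparing with `χ(x² - a) = 2·[x ∈ T] - 1 + [x² = a]`
and `#{x | x² = a} = χ(a) + 1` gives `2 #T = p - 2 - χ(a)`.
-/

/-- `u` is a square modulo `N`. -/
def IsSquareMod (u : ℤ) (N : ℕ) : Prop := ∃ x : ℤ, x ^ 2 ≡ u [ZMOD (N : ℤ)]

/-- `S'_2(a;p^t)`: residues `k mod p^t` with `k² - a` a square mod `p^t` and `p ∤ (k² - a)`. -/
def S2' (a : ℤ) (p t : ℕ) : Set (ZMod (p ^ t)) :=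
  {s | ∃ k : ℤ, s = (k : ZMod (p ^ t)) ∧ IsSquareMod (k ^ 2 - a) (p ^ t) ∧
    ¬ ((p : ℤ) ∣ (k ^ 2 - a))}

open Finset

theorem isSquareMod_iff_isSquare_intCast (u : ℤ) (N : ℕ) :
    IsSquareMod u N ↔ IsSquare (u : ZMod N) := by
  constructor
  · rintro ⟨x, hx⟩
    refine ⟨x, ?_⟩
    rw [← (ZMod.intCast_eq_intCast_iff _ _ _).2 hx]
    push_cast
    ring
  · rintro ⟨r, hr⟩
    obtain ⟨x, rfl⟩ := ZMod.intCast_surjective r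
    exact ⟨x, (ZMod.intCast_eq_intCast_iff _ _ _).1 (by push_cast; rw [hr, sq])⟩

theorem IsSquareMod.of_dvd {u : ℤ} {M N : ℕ} (hMN : M ∣ N) (h : IsSquareMod u N) :
    IsSquareMod u M :=
  let ⟨x, hx⟩ := h
  ⟨x, hx.of_dvd (Int.natCast_dvd_natCast.2 hMN)⟩

/-- Hensel's lemma for `x ^ 2 = u`: the Newton step `x ↦ x - m (x ^ 2 - u)`, with `m` an inverse
of `2 x` modulo `p`, gains one power of `p`. -/
theorem IsSquareMod.prime_pow {p : ℕ} (hp : p.Prime) (hp2 : p ≠ 2) {u : ℤ}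
    (hu : ¬ (p : ℤ) ∣ u) (h : IsSquareMod u p) {t : ℕ} (ht : 1 ≤ t) :
    IsSquareMod u (p ^ t) := by
  induction t, ht using Nat.le_induction with
  | base => simpa using h
  | succ j hj ih =>
    obtain ⟨x, hx⟩ := ih
    push_cast at hx ⊢
    have hd : (p : ℤ) ^ j ∣ x ^ 2 - u := Int.modEq_iff_dvd.1 hx.symm
    have hpx : ¬ (p : ℤ) ∣ x := fun hpx => hu <| by
      simpa using dvd_sub (dvd_pow hpx two_ne_zero) ((dvd_pow_self _ (by omega)).trans hd)
    have hcop : IsCoprime (2 * x) p :=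
      .mul_left (Nat.isCoprime_iff_coprime.2 (Nat.coprime_two_left.2 (hp.odd_of_ne_two hp2)))
        ((Nat.prime_iff_prime_int.1 hp).coprime_iff_not_dvd.2 hpx).symm
    obtain ⟨m, n, hmn⟩ := hcop
    have hlin : (p : ℤ) ^ (j + 1) ∣ (x ^ 2 - u) * p :=
      pow_succ (p : ℤ) j ▸ mul_dvd_mul_right hd _
    have hquad : (p : ℤ) ^ (j + 1) ∣ (x ^ 2 - u) ^ 2 :=
      (pow_dvd_pow _ (by omega : j + 1 ≤ j * 2)).trans
        (pow_mul (p : ℤ) j 2 ▸ pow_dvd_pow_of_dvd hd 2)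
    refine ⟨x - m * (x ^ 2 - u), Int.modEq_iff_dvd.2 ?_⟩
    have hnewton : u - (x - m * (x ^ 2 - u)) ^ 2
        = -(n * ((x ^ 2 - u) * p)) - m ^ 2 * (x ^ 2 - u) ^ 2 := by
      linear_combination (x ^ 2 - u) * hmn
    rw [hnewton]
    exact dvd_sub (dvd_neg.2 (hlin.mul_left n)) (hquad.mul_left _)

theorem card_filter_apply_mem_mul_card {G M F : Type*} [AddGroup G] [Fintype G] [AddMonoid M]
    [Fintype M] [DecidableEq M] [FunLike F G M] [AddMonoidHomClass F G M] (f : F)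
    (hf : Function.Surjective f) (S : Finset M) :
    #{g | f g ∈ S} * Fintype.card M = Fintype.card G * #S := by
  obtain ⟨c, hc⟩ : ∃ c, ∀ y, #{g | f g = y} = c :=
    ⟨_, fun y => AddMonoidHom.card_fiber_eq_of_mem_range f (hf y) (hf 0)⟩
  have hfibers (s : Finset M) : #{g | f g ∈ s} = #s * c := by
    rw [card_eq_sum_card_fiberwise (f := f) (t := s) (fun g hg => by simpa using hg)]
    refine sum_const_nat fun y hy => ?_
    rw [filter_filter, ← hc y]
    congr 1
    ext g
    simp +contextual [hy]
  have hG : Fintype.card G = Fintype.card M * c := by simpa using hfibers univ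
  rw [hfibers, hG]
  ring

section FiniteField

variable {F : Type*} [Field F] [Fintype F] [DecidableEq F]

theorem card_filter_mul_eq {b : F} (hb : b ≠ 0) :
    #{z : F × F | z.1 * z.2 = b} = Fintype.card F - 1 := by
  have hfst {z : F × F} (hz : z.1 * z.2 = b) : z.1 ≠ 0 := by
    rintro h0
    simp [h0, eq_comm, hb] at hz
  rw [← card_univ, ← card_erase_of_mem (mem_univ (0 : F))]
  refine card_nbij' Prod.fst (fun x => (x, x⁻¹ * b)) ?_ ?_ ?_ ?_
  · intro z hz
    simpa using hfst (by simpa using hz)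
  · intro x hx
    simp_all
  · intro z hz
    simp only [coe_filter, mem_univ, true_and, Set.mem_ofPred_eq] at hz
    ext <;> simp [← hz, hfst hz]
  · intro x _
    rfl

theorem card_filter_sq_sub_sq_eq (hF : ringChar F ≠ 2) {b : F} (hb : b ≠ 0) :
    #{z : F × F | z.1 ^ 2 - z.2 ^ 2 = b} = Fintype.card F - 1 := by
  have h2 : (2 : F) ≠ 0 := Ring.two_ne_zero hF
  rw [← card_filter_mul_eq hb]
  refine card_nbij' (fun z => (z.1 + z.2, z.1 - z.2))
    (fun w => ((w.1 + w.2) / 2, (w.1 - w.2) / 2)) ?_ ?_ ?_ ?_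
  · intro z hz
    simp only [coe_filter, mem_univ, true_and, Set.mem_ofPred_eq] at hz ⊢
    rw [← hz]; ring
  · intro w hw
    simp only [coe_filter, mem_univ, true_and, Set.mem_ofPred_eq] at hw ⊢
    rw [← hw]; field_simp; ring
  · intro z _
    ext <;> field_simp <;> ring
  · intro w _
    ext <;> field_simp <;> ring

theorem card_filter_prod_eq_sum {α β : Type*} [Fintype α] [Fintype β] (P : α → β → Prop)
    [DecidablePred fun z : α × β => P z.1 z.2] [∀ x, DecidablePred (P x)] :
    #{z : α × β | P z.1 z.2} = ∑ x, #{y | P x y} := by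
  simp only [card_filter, Fintype.sum_prod_type]

theorem sum_quadraticChar_sq_sub (hF : ringChar F ≠ 2) {b : F} (hb : b ≠ 0) :
    ∑ s : F, quadraticChar F (s ^ 2 - b) = -1 := by
  have hcount := card_filter_prod_eq_sum (fun s y : F => s ^ 2 - y ^ 2 = b)
  rw [card_filter_sq_sub_sq_eq hF hb] at hcount
  have hfiber (s : F) : quadraticChar F (s ^ 2 - b) = #{y : F | s ^ 2 - y ^ 2 = b} - 1 := by
    rw [eq_sub_iff_add_eq, ← quadraticChar_card_sqrts hF, Set.toFinset_ofPred]
    congr 3; ext y; constructor <;> intro h <;> linear_combination -h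
  simp only [hfiber, sum_sub_distrib, ← Nat.cast_sum, ← hcount, sum_const, card_univ]
  have := Fintype.card_pos (α := F)
  push_cast [Nat.cast_sub (by omega : 1 ≤ Fintype.card F)]
  ring

theorem two_mul_card_filter_isSquare_sq_sub (hF : ringChar F ≠ 2) {b : F} (hb : b ≠ 0) :
    2 * (#{s : F | s ^ 2 - b ≠ 0 ∧ IsSquare (s ^ 2 - b)} : ℤ)
      = Fintype.card F - 2 - quadraticChar F b := by
  have hvalue (s : F) : quadraticChar F (s ^ 2 - b) =
      2 * (if s ^ 2 - b ≠ 0 ∧ IsSquare (s ^ 2 - b) then 1 else 0) - 1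
        + (if s ^ 2 = b then 1 else 0) := by
    by_cases hs : s ^ 2 = b
    · simp [hs]
    have hs' : s ^ 2 - b ≠ 0 := sub_ne_zero.2 hs
    by_cases hsq : IsSquare (s ^ 2 - b)
    · simp [hs, hs', hsq, (quadraticChar_one_iff_isSquare hs').2 hsq]
    · simp [hs, hsq, quadraticChar_neg_one_iff_not_isSquare.2 hsq]
  have hroots := quadraticChar_card_sqrts hF b
  rw [Set.toFinset_ofPred] at hroots
  have hsum := sum_quadraticChar_sq_sub hF hb
  simp only [hvalue, sum_add_distrib, sum_sub_distrib, ← mul_sum, sum_const, card_univ] at hsum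
  rw [natCast_card_filter] at hroots ⊢
  linear_combination hsum - hroots

end FiniteField

theorem isSquareMod_prime_pow_and_not_dvd_iff {p : ℕ} (hp : p.Prime) (hp2 : p ≠ 2) {t : ℕ}
    (ht : 1 ≤ t) (u : ℤ) :
    IsSquareMod u (p ^ t) ∧ ¬ (p : ℤ) ∣ u ↔ (u : ZMod p) ≠ 0 ∧ IsSquare (u : ZMod p) := by
  rw [ne_eq, ZMod.intCast_zmod_eq_zero_iff_dvd, ← isSquareMod_iff_isSquare_intCast]
  constructor
  · rintro ⟨h, hu⟩
    exact ⟨hu, h.of_dvd (dvd_pow_self p (by omega))⟩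
  · rintro ⟨hu, h⟩
    exact ⟨h.prime_pow hp hp2 hu ht, hu⟩

section S2'

variable {p : ℕ} [Fact p.Prime] {t : ℕ}

theorem S2'_eq_preimage (hp2 : p ≠ 2) (ht : 1 ≤ t) (a : ℤ) :
    S2' a p t = ZMod.castHom (dvd_pow_self p (by omega)) (ZMod p) ⁻¹'
      {y | y ^ 2 - a ≠ 0 ∧ IsSquare (y ^ 2 - a)} := by
  have hchar (k : ℤ) := isSquareMod_prime_pow_and_not_dvd_iff Fact.out hp2 ht (k ^ 2 - a)
  push_cast at hchar
  ext s
  obtain ⟨k, rfl⟩ := ZMod.intCast_surjective s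
  simp only [S2', Set.mem_ofPred_eq, Set.mem_preimage, map_intCast]
  constructor
  · rintro ⟨k', hk, hk'⟩
    have hk := congrArg (ZMod.castHom (dvd_pow_self p (by omega : t ≠ 0)) (ZMod p)) hk
    simp only [map_intCast] at hk
    exact hk ▸ (hchar k').1 hk'
  · exact fun hk => ⟨k, rfl, (hchar k).2 hk⟩

theorem ncard_S2' (hp2 : p ≠ 2) (ht : 1 ≤ t) (a : ℤ) :
    (S2' a p t).ncard =
      p ^ (t - 1) * #{y : ZMod p | y ^ 2 - a ≠ 0 ∧ IsSquare (y ^ 2 - a)} := by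
  have hcard := card_filter_apply_mem_mul_card _
    (ZMod.castHom_surjective (dvd_pow_self p (by omega : t ≠ 0)))
    {y : ZMod p | y ^ 2 - a ≠ 0 ∧ IsSquare (y ^ 2 - a)}
  rw [ZMod.card, ZMod.card] at hcard
  refine Nat.eq_of_mul_eq_mul_right (Fact.out : p.Prime).pos ?_
  rw [mul_right_comm, pow_sub_one_mul (by omega), ← hcard, S2'_eq_preimage hp2 ht,
    ← Set.ncard_coe_finset]
  congr 2
  ext
  simp

end S2'

theorem stmt7 (p : ℕ) [hp : Fact p.Prime] (hp2 : p ≠ 2) (t : ℕ) (ht : 1 ≤ t)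
    (a : ℤ) (ha : IsCoprime a (p : ℤ)) :
    (legendreSym p a = -1 →
      ((S2' a p t).ncard : ℚ) = ((p : ℚ) - 1) * (p : ℚ) ^ (t - 1) / 2) ∧
    (legendreSym p a = 1 →
      ((S2' a p t).ncard : ℚ) = ((p : ℚ) - 3) * (p : ℚ) ^ (t - 1) / 2) := by
  have ha0 : (a : ZMod p) ≠ 0 := by
    rw [ne_eq, ZMod.intCast_zmod_eq_zero_iff_dvd,
      ← (Nat.prime_iff_prime_int.1 hp.out).coprime_iff_not_dvd]
    exact ha.symm
  have hcount : 2 * (#{y : ZMod p | y ^ 2 - a ≠ 0 ∧ IsSquare (y ^ 2 - a)} : ℚ)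
      = p - 2 - legendreSym p a := by
    exact_mod_cast ZMod.card p ▸
      two_mul_card_filter_isSquare_sq_sub (by rwa [ZMod.ringChar_zmod_n]) ha0
  have hncard := ncard_S2' hp2 ht a
  refine ⟨fun hleg => ?_, fun hleg => ?_⟩ <;>
  · rw [hleg] at hcount
    rw [hncard]
    push_cast at hcount ⊢
    linear_combination (p : ℚ) ^ (t - 1) / 2 * hcount
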